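/- Monotonicity of the relative value iteration (RVIA) iterates (Lemma 2): fix a reference state Q† ∈ 𝒬 and define V_0(Q) = 0 for all Q ∈ 𝒬 and, for l ≥ 0, V_{l+1}(Q) = min_{u∈𝒰} J_{V_l}(Q,u) − min_{u∈𝒰} J_{V_l}(Q†,u). Then for every l ≥ 0 and all states Q¹ ⪯ Q², one has V_l(Q¹) ≤ V_l(Q²); i.e., every RVIA iterate is monotone with respect to the componentwise order. -/

import Mathlib

open Finset

namespace HetNet

/-- The queue index set `I = {(n,m) : 0 ≤ n ≤ N, m ∈ M_n}`. -/
abbrev Idx {N M : ℕ} (cache : Fin (N + 1) → Finset (Fin M)) : Type :=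
  {p : Fin (N + 1) × Fin M // p.2 ∈ cache p.1}

/-- The feasible action space `𝒰`: each BS schedules a cached content or idles (`none`),
and the MBS (BS `0`) and the SBSs do not operate concurrently. -/
def Feasible {N M : ℕ} (cache : Fin (N + 1) → Finset (Fin M))
    (u : Fin (N + 1) → Option (Fin M)) : Prop :=
  (∀ n m, u n = some m → m ∈ cache n) ∧ (u 0 ≠ none → ∀ n, n ≠ 0 → u n = none)

instance {N M : ℕ} (cache : Fin (N + 1) → Finset (Fin M)) :
    DecidablePred (Feasible cache) := by
  intro u; unfold Feasible; infer_instance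

instance {N M : ℕ} (cache : Fin (N + 1) → Finset (Fin M)) :
    Nonempty {u : Fin (N + 1) → Option (Fin M) // Feasible cache u} :=
  ⟨⟨fun _ => none, by
    unfold Feasible; exact ⟨fun _ _ h => by simp at h, fun h => absurd rfl h⟩⟩⟩

/-- Queue `(n,m)` is served by action `u`. -/
def Served {N M : ℕ} (u : Fin (N + 1) → Option (Fin M)) (n : Fin (N + 1)) (m : Fin M) : Prop :=
  (n = 0 ∧ u 0 = some m) ∨ (n ≠ 0 ∧ (u 0 = some m ∨ u n = some m))

instance {N M : ℕ} (u : Fin (N + 1) → Option (Fin M)) (n : Fin (N + 1)) (m : Fin M) :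
    Decidable (Served u n m) := by unfold Served; infer_instance

/-- The queue transition map `T(Q,u,A)`. -/
def T {N M : ℕ} {cache : Fin (N + 1) → Finset (Fin M)} (bound : Idx cache → ℕ)
    (Q : Idx cache → ℕ) (u : Fin (N + 1) → Option (Fin M)) (A : Idx cache → ℕ) :
    Idx cache → ℕ := fun i =>
  if Served u i.val.1 i.val.2 then min (A i) (bound i) else min (Q i + A i) (bound i)

/-- The network power cost `p(u) = Σ_n p(n, u_n)` (with `p(n,0) = 0` for an idling BS). -/
def pcost {N M : ℕ} (p : Fin (N + 1) → Fin M → ℝ) (u : Fin (N + 1) → Option (Fin M)) : ℝ :=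
  ∑ n, (u n).elim 0 (p n)

/-- The sum request queue length `d(Q)`. -/
def dcost {N M : ℕ} {cache : Fin (N + 1) → Finset (Fin M)} (Q : Idx cache → ℕ) : ℝ :=
  ∑ i, (Q i : ℝ)

/-- The per-stage cost `g(Q,u) = d(Q) + w·p(u)`. -/
def gcost {N M : ℕ} (p : Fin (N + 1) → Fin M → ℝ) (w : ℝ)
    {cache : Fin (N + 1) → Finset (Fin M)}
    (Q : Idx cache → ℕ) (u : Fin (N + 1) → Option (Fin M)) : ℝ :=
  dcost Q + w * pcost p u

/-- The state-action cost `J_V(Q,u) = g(Q,u) + Σ_{A∈𝒜} P(A)·V(T(Q,u,A))`. -/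
def Jcost {N M : ℕ} (p : Fin (N + 1) → Fin M → ℝ) (w : ℝ)
    {cache : Fin (N + 1) → Finset (Fin M)} (bound : Idx cache → ℕ)
    {ι : Type} [Fintype ι] (P : ι → ℝ) (A : ι → Idx cache → ℕ)
    (V : (Idx cache → ℕ) → ℝ) (Q : Idx cache → ℕ)
    (u : Fin (N + 1) → Option (Fin M)) : ℝ :=
  gcost p w Q u + ∑ a, P a * V (T bound Q u (A a))

/-! Each RVIA step preserves monotonicity in the state: the queue-length cost and the
transition `T(·, u, A)` are monotone, averaging with nonnegative weights and minimising over
the finite action set preserve the order, and the normalisation at `Q†` subtracts a constant.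
Induction on `l` starting from `V_0 ≡ 0` concludes. -/

theorem monotone_ciInf_of_finite {α ι β : Type*} [Preorder α] [Finite ι]
    [ConditionallyCompleteLinearOrder β] {f : α → ι → β} (hf : ∀ i, Monotone (f · i)) :
    Monotone fun x => ⨅ i, f x i :=
  fun _ _ hxy => ciInf_mono (Set.finite_range _).bddBelow fun i => hf i hxy

section

variable {N M : ℕ} {cache : Fin (N + 1) → Finset (Fin M)}

theorem T_mono_left (bound : Idx cache → ℕ) (u : Fin (N + 1) → Option (Fin M))
    (A : Idx cache → ℕ) : Monotone fun Q => T bound Q u A := by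
  intro Q₁ Q₂ hQ i
  dsimp only [T]
  split
  · exact le_rfl
  · exact min_le_min_right _ (Nat.add_le_add_right (hQ i) _)

theorem dcost_mono : Monotone (dcost (cache := cache)) :=
  fun _ _ hQ => sum_le_sum fun i _ => Nat.cast_le.mpr (hQ i)

theorem Jcost_mono_left (p : Fin (N + 1) → Fin M → ℝ) (w : ℝ) (bound : Idx cache → ℕ)
    {ι : Type} [Fintype ι] {P : ι → ℝ} (hP : ∀ a, 0 ≤ P a) (A : ι → Idx cache → ℕ)
    {V : (Idx cache → ℕ) → ℝ} (hV : Monotone V) (u : Fin (N + 1) → Option (Fin M)) :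
    Monotone fun Q => Jcost p w bound P A V Q u := by
  intro Q₁ Q₂ hQ
  have hnext : ∀ a, V (T bound Q₁ u (A a)) ≤ V (T bound Q₂ u (A a)) :=
    fun a => hV (T_mono_left bound u (A a) hQ)
  unfold Jcost gcost
  exact add_le_add (add_le_add (dcost_mono hQ) le_rfl)
    (sum_le_sum fun a _ => mul_le_mul_of_nonneg_left (hnext a) (hP a))

end

theorem rvia_iterates_monotone_general {N M : ℕ} (cache : Fin (N + 1) → Finset (Fin M))
    (bound : Idx cache → ℕ)
    (p : Fin (N + 1) → Fin M → ℝ)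
    (w : ℝ)
    {ι : Type} [Fintype ι] (P : ι → ℝ) (A : ι → Idx cache → ℕ)
    (hP : ∀ a, 0 ≤ P a)
    (Qd : Idx cache → ℕ)
    (Vs : ℕ → (Idx cache → ℕ) → ℝ)
    (h0 : ∀ Q, Vs 0 Q = 0)
    (hrec : ∀ l Q, Vs (l + 1) Q =
      (⨅ u : {u // Feasible cache u}, Jcost p w bound P A (Vs l) Q u.val) -
        (⨅ u : {u // Feasible cache u}, Jcost p w bound P A (Vs l) Qd u.val)) :
    ∀ l : ℕ, ∀ Q₁ Q₂ : Idx cache → ℕ, (∀ i, Q₁ i ≤ bound i) → (∀ i, Q₂ i ≤ bound i) →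
      (∀ i, Q₁ i ≤ Q₂ i) → Vs l Q₁ ≤ Vs l Q₂ := by
  have hmono : ∀ l, Monotone (Vs l) := by
    intro l
    induction l with
    | zero => intro Q₁ Q₂ _; simp only [h0, le_refl]
    | succ l ih =>
      intro Q₁ Q₂ hQ
      rw [hrec, hrec]
      exact sub_le_sub_right (monotone_ciInf_of_finite
        (f := fun Q (u : {u // Feasible cache u}) => Jcost p w bound P A (Vs l) Q u.val)
        (fun u => Jcost_mono_left p w bound hP A ih u.val) hQ) _
  exact fun l _ _ _ _ hQ => hmono l hQ

/-- Lemma 2: monotonicity of the RVIA iterates: fix a reference state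
`Q† ∈ 𝒬` and define `V_0 ≡ 0` and
`V_{l+1}(Q) = min_{u∈𝒰} J_{V_l}(Q,u) − min_{u∈𝒰} J_{V_l}(Q†,u)`.  Then every RVIA iterate
`V_l` is monotone w.r.t. the componentwise order on `𝒬`. -/
theorem rvia_iterates_monotone {N M : ℕ} (cache : Fin (N + 1) → Finset (Fin M))
    (hcache0 : ∀ m : Fin M, m ∈ cache 0)
    (bound : Idx cache → ℕ)
    (p : Fin (N + 1) → Fin M → ℝ) (hp : ∀ n m, 0 ≤ p n m)
    (w : ℝ) (hw : 0 ≤ w)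
    {ι : Type} [Fintype ι] (P : ι → ℝ) (A : ι → Idx cache → ℕ)
    (hP : ∀ a, 0 ≤ P a) (hPsum : ∑ a, P a = 1)
    (Qd : Idx cache → ℕ) (hQd : ∀ i, Qd i ≤ bound i)
    (Vs : ℕ → (Idx cache → ℕ) → ℝ)
    (h0 : ∀ Q, Vs 0 Q = 0)
    (hrec : ∀ l Q, Vs (l + 1) Q =
      (⨅ u : {u // Feasible cache u}, Jcost p w bound P A (Vs l) Q u.val) -
        (⨅ u : {u // Feasible cache u}, Jcost p w bound P A (Vs l) Qd u.val)) :
    ∀ l : ℕ, ∀ Q₁ Q₂ : Idx cache → ℕ, (∀ i, Q₁ i ≤ bound i) → (∀ i, Q₂ i ≤ bound i) →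
      (∀ i, Q₁ i ≤ Q₂ i) → Vs l Q₁ ≤ Vs l Q₂ :=
  rvia_iterates_monotone_general cache bound p w P A hP Qd Vs h0 hrec

end HetNet
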